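/- Let Ω ⊆ ℝⁿ be open, u ∈ C¹(Ω, ℝᴺ), Ω' compactly contained in Ω, and A : ℝⁿ → ℝᴺ affine. Define h(t) := ‖Du + t DA‖²_{L^∞(Ω')} − ‖Du‖²_{L^∞(Ω')} for t ≥ 0, and let Ω'(u) := { x ∈ closure(Ω') : |Du(x)| = ‖Du‖_{L^∞(Ω')} }. Then h is convex, h(0) = 0, and liminf_{t→0⁺} h(t)/t ≥ max_{y ∈ Ω'(u)} { 2 Du(y) : DA }. -/

import Mathlib

open scoped BigOperators
open Filter

/-- The gradient matrix `Du(x) ∈ ℝ^{N×n}` of `u : ℝⁿ → ℝᴺ`. -/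
noncomputable def gradm {n N : ℕ} (u : (Fin n → ℝ) → (Fin N → ℝ)) (x : Fin n → ℝ) :
    Matrix (Fin N) (Fin n) ℝ :=
  fun α i => fderiv ℝ u x (Pi.single i 1) α

/-- The Frobenius (Euclidean) norm of an `N×n` matrix. -/
noncomputable def mnorm {n N : ℕ} (M : Matrix (Fin N) (Fin n) ℝ) : ℝ :=
  Real.sqrt (∑ α, ∑ i, (M α i) ^ 2)

/-- The Frobenius inner product `M : P` of two `N×n` matrices. -/
def finner {n N : ℕ} (M P : Matrix (Fin N) (Fin n) ℝ) : ℝ :=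
  ∑ α, ∑ i, M α i * P α i

/-!
For a bounded family `g` on `K` and a direction `d`, the function `f t = sup_K ‖g + t d‖` is a
supremum of convex functions of `t`, hence convex, and it is nonnegative, so `h = f² - f(0)²` is
convex. If `y` attains `f 0`, then
`h t ≥ ‖g y + t d‖² - ‖g y‖² = 2 t ⟪g y, d⟫ + t² ‖d‖² ≥ 2 t ⟪g y, d⟫`,
and convexity with `h 0 = 0` bounds `h t / t` above by `h 1` on `(0, 1]`, so the `liminf` of the
difference quotients is finite and at least `2 ⟪g y, d⟫`. Compactness of `closure Ω'` and continuity
of `Du` supply the maximisers; the Frobenius structure on matrices is the Euclidean one.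
-/

open Set Bornology Topology

section SupNormOn

variable {α E : Type*} [NormedAddCommGroup E] {K : Set α} {g : α → E}

noncomputable def supNormOn (K : Set α) (g : α → E) : ℝ :=
  sSup ((fun y => ‖g y‖) '' K)

lemma supNormOn_nonneg (K : Set α) (g : α → E) : 0 ≤ supNormOn K g :=
  Real.sSup_nonneg (by rintro _ ⟨y, -, rfl⟩; exact norm_nonneg _)

lemma supNormOn_le {c : ℝ} (hc : 0 ≤ c) (hg : ∀ y ∈ K, ‖g y‖ ≤ c) : supNormOn K g ≤ c :=
  Real.sSup_le (by rintro _ ⟨y, hy, rfl⟩; exact hg y hy) hc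

lemma norm_le_supNormOn (hg : IsBounded (g '' K)) {y : α} (hy : y ∈ K) :
    ‖g y‖ ≤ supNormOn K g := by
  obtain ⟨C, hC⟩ := hg.exists_norm_le
  exact le_csSup ⟨C, by rintro _ ⟨z, hz, rfl⟩; exact hC _ (mem_image_of_mem g hz)⟩
    (mem_image_of_mem _ hy)

lemma supNormOn_empty (g : α → E) : supNormOn ∅ g = 0 := by
  simp [supNormOn]

end SupNormOn

lemma ConvexOn.isCoboundedUnder_ge_div_nhdsGT {φ : ℝ → ℝ} (hφ : ConvexOn ℝ (Ici 0) φ)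
    (h0 : φ 0 = 0) : IsCoboundedUnder (· ≥ ·) (𝓝[>] 0) fun t => φ t / t := by
  refine IsBoundedUnder.isCoboundedUnder_ge ⟨φ 1, eventually_map.2 ?_⟩
  filter_upwards [Ioc_mem_nhdsGT zero_lt_one] with t ht
  simpa [h0] using hφ.secant_mono (mem_Ici.2 le_rfl) ht.1.le (mem_Ici.2 zero_le_one) ht.1.ne'
    one_ne_zero ht.2

section Increment

variable {α E : Type*} [NormedAddCommGroup E] [NormedSpace ℝ E] {K : Set α} {g : α → E}

lemma isBounded_image_add_smul (hg : IsBounded (g '' K)) (d : E) (t : ℝ) :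
    IsBounded ((fun y => g y + t • d) '' K) := by
  obtain ⟨C, hC⟩ := hg.exists_norm_le
  refine isBounded_iff_forall_norm_le.2 ⟨C + ‖t • d‖, ?_⟩
  rintro _ ⟨y, hy, rfl⟩
  exact (norm_add_le _ _).trans (by gcongr; exact hC _ (mem_image_of_mem g hy))

lemma convexOn_supNormOn_add_smul (hg : IsBounded (g '' K)) (d : E) :
    ConvexOn ℝ univ fun t : ℝ => supNormOn K fun y => g y + t • d := by
  refine ⟨convex_univ, fun t _ s _ a b ha hb hab => supNormOn_le ?_ fun y hy => ?_⟩
  · exact add_nonneg (mul_nonneg ha (supNormOn_nonneg _ _)) (mul_nonneg hb (supNormOn_nonneg _ _))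
  have hsplit : g y + (a • t + b • s) • d = a • (g y + t • d) + b • (g y + s • d) := by
    linear_combination (norm := module) -(hab • g y)
  calc ‖g y + (a • t + b • s) • d‖ ≤ a * ‖g y + t • d‖ + b * ‖g y + s • d‖ := by
        rw [hsplit]
        refine (norm_add_le _ _).trans_eq ?_
        rw [norm_smul, norm_smul, Real.norm_of_nonneg ha, Real.norm_of_nonneg hb]
    _ ≤ a * supNormOn K (fun y => g y + t • d) + b * supNormOn K (fun y => g y + s • d) := by
        gcongr <;> exact norm_le_supNormOn (isBounded_image_add_smul hg d _) hy

/-- The function `h` of the statement, for a general family `g` and direction `d`. -/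
noncomputable def supNormSqIncrement (K : Set α) (g : α → E) (d : E) (t : ℝ) : ℝ :=
  supNormOn K (fun y => g y + t • d) ^ 2 - supNormOn K g ^ 2

lemma supNormSqIncrement_zero (d : E) : supNormSqIncrement K g d 0 = 0 := by
  simp [supNormSqIncrement]

lemma convexOn_supNormSqIncrement (hg : IsBounded (g '' K)) (d : E) :
    ConvexOn ℝ univ (supNormSqIncrement K g d) :=
  ((convexOn_supNormOn_add_smul hg d).pow (fun _ _ => supNormOn_nonneg _ _) 2).add_const
    (-supNormOn K g ^ 2)

end Increment

section InnerProductSpace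

variable {α E : Type*} [NormedAddCommGroup E] [InnerProductSpace ℝ E] {K : Set α} {g : α → E}

lemma two_mul_inner_le_supNormSqIncrement_div (hg : IsBounded (g '' K)) (d : E) {y : α}
    (hy : y ∈ K) (hmax : ‖g y‖ = supNormOn K g) {t : ℝ} (ht : 0 < t) :
    2 * inner ℝ (g y) d ≤ supNormSqIncrement K g d t / t := by
  have hyt : ‖g y + t • d‖ ^ 2 ≤ supNormOn K (fun y => g y + t • d) ^ 2 :=
    pow_le_pow_left₀ (norm_nonneg _) (norm_le_supNormOn (isBounded_image_add_smul hg d t) hy) 2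
  have hexp : ‖g y + t • d‖ ^ 2 = ‖g y‖ ^ 2 + 2 * t * inner ℝ (g y) d + t ^ 2 * ‖d‖ ^ 2 := by
    rw [norm_add_sq_real, real_inner_smul_right, norm_smul, Real.norm_of_nonneg ht.le]
    ring
  rw [le_div_iff₀ ht, supNormSqIncrement, ← hmax]
  nlinarith [sq_nonneg (t * ‖d‖)]

lemma le_liminf_supNormSqIncrement_div (hg : IsBounded (g '' K)) (d : E) {y : α} (hy : y ∈ K)
    (hmax : ‖g y‖ = supNormOn K g) :
    2 * inner ℝ (g y) d ≤ liminf (fun t => supNormSqIncrement K g d t / t) (𝓝[>] 0) := by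
  have hconv := (convexOn_supNormSqIncrement hg d).subset (subset_univ _) (convex_Ici 0)
  exact le_liminf_of_le (hconv.isCoboundedUnder_ge_div_nhdsGT (supNormSqIncrement_zero d))
    (eventually_nhdsWithin_of_forall fun _ ht =>
      two_mul_inner_le_supNormSqIncrement_div hg d hy hmax ht)

lemma sSup_two_mul_inner_le_liminf_supNormSqIncrement_div [TopologicalSpace α]
    (hK : IsCompact K) (hg : ContinuousOn g K) (d : E) :
    sSup ((fun y => 2 * inner ℝ (g y) d) '' {x ∈ K | ‖g x‖ = supNormOn K g}) ≤
      liminf (fun t => supNormSqIncrement K g d t / t) (𝓝[>] 0) := by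
  rcases K.eq_empty_or_nonempty with rfl | hne
  · simp [supNormSqIncrement, supNormOn_empty]
  obtain ⟨y₀, hy₀, hmax₀, -⟩ := hK.exists_sSup_image_eq_and_ge hne hg.norm
  refine csSup_le ⟨_, mem_image_of_mem _ ⟨hy₀, hmax₀.symm⟩⟩ ?_
  rintro _ ⟨y, ⟨hy, hmax⟩, rfl⟩
  exact le_liminf_supNormSqIncrement_div (hK.image_of_continuousOn hg).isBounded d hy hmax

end InnerProductSpace

section Frobenius

variable {n N : ℕ}

noncomputable def frobeniusVec (M : Matrix (Fin N) (Fin n) ℝ) :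
    EuclideanSpace ℝ (Fin N × Fin n) :=
  WithLp.toLp 2 fun p => M p.1 p.2

lemma frobeniusVec_add (M P : Matrix (Fin N) (Fin n) ℝ) :
    frobeniusVec (M + P) = frobeniusVec M + frobeniusVec P := rfl

lemma frobeniusVec_smul (t : ℝ) (M : Matrix (Fin N) (Fin n) ℝ) :
    frobeniusVec (t • M) = t • frobeniusVec M := rfl

lemma continuous_frobeniusVec : Continuous (frobeniusVec (n := n) (N := N)) :=
  (PiLp.continuous_toLp 2 _).comp
    (continuous_pi fun p => (continuous_apply p.2).comp (continuous_apply p.1))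

lemma mnorm_eq_norm_frobeniusVec (M : Matrix (Fin N) (Fin n) ℝ) :
    mnorm M = ‖frobeniusVec M‖ := by
  rw [mnorm, EuclideanSpace.norm_eq, Fintype.sum_prod_type]
  simp [frobeniusVec]

lemma finner_eq_inner_frobeniusVec (M P : Matrix (Fin N) (Fin n) ℝ) :
    finner M P = inner ℝ (frobeniusVec M) (frobeniusVec P) := by
  rw [finner, PiLp.inner_apply, Fintype.sum_prod_type]
  simp [frobeniusVec, mul_comm]

end Frobenius

lemma continuousOn_gradm {n N : ℕ} {Ω : Set (Fin n → ℝ)} (hΩ : IsOpen Ω)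
    {u : (Fin n → ℝ) → (Fin N → ℝ)} (hu : ContDiffOn ℝ 1 u Ω) : ContinuousOn (gradm u) Ω :=
  continuousOn_pi.2 fun α => continuousOn_pi.2 fun i =>
    ((continuous_apply α).comp (ContinuousLinearMap.apply ℝ (Fin N → ℝ)
      (Pi.single i 1 : Fin n → ℝ)).continuous).comp_continuousOn
        (hu.continuousOn_fderiv_of_isOpen hΩ le_rfl)

theorem stmt2_general {n N : ℕ} (Ω : Set (Fin n → ℝ)) (hΩ : IsOpen Ω)
    (u : (Fin n → ℝ) → (Fin N → ℝ)) (hu : ContDiffOn ℝ 1 u Ω)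
    (Ω' : Set (Fin n → ℝ)) (hbd : Bornology.IsBounded Ω')
    (hcl : closure Ω' ⊆ Ω)
    (DA : Matrix (Fin N) (Fin n) ℝ)
    (h : ℝ → ℝ)
    (hdef : ∀ t : ℝ, h t =
      (sSup ((fun y => mnorm (gradm u y + t • DA)) '' closure Ω')) ^ 2 -
        (sSup ((fun y => mnorm (gradm u y)) '' closure Ω')) ^ 2) :
    ConvexOn ℝ (Set.Ici (0 : ℝ)) h ∧ h 0 = 0 ∧
      sSup ((fun y => 2 * finner (gradm u y) DA) ''
          {x ∈ closure Ω' |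
            mnorm (gradm u x) = sSup ((fun y => mnorm (gradm u y)) '' closure Ω')}) ≤
        Filter.liminf (fun t => h t / t) (nhdsWithin 0 (Set.Ioi 0)) := by
  set G := fun y => frobeniusVec (gradm u y)
  have hK : IsCompact (closure Ω') := hbd.isCompact_closure
  have hG : ContinuousOn G (closure Ω') :=
    continuous_frobeniusVec.comp_continuousOn ((continuousOn_gradm hΩ hu).mono hcl)
  have hconv := convexOn_supNormSqIncrement (hK.image_of_continuousOn hG).isBounded
    (frobeniusVec DA)
  obtain rfl : h = supNormSqIncrement (closure Ω') G (frobeniusVec DA) := funext fun t => by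
    simp only [hdef, supNormSqIncrement, supNormOn, mnorm_eq_norm_frobeniusVec, frobeniusVec_add,
      frobeniusVec_smul, G]
  simp only [mnorm_eq_norm_frobeniusVec, finner_eq_inner_frobeniusVec]
  exact ⟨hconv.subset (subset_univ _) (convex_Ici 0),
    supNormSqIncrement_zero _, sSup_two_mul_inner_le_liminf_supNormSqIncrement_div hK hG _⟩

/-- Lemma 3.2: `h(t) := ‖Du + t DA‖²_{L^∞(Ω')} − ‖Du‖²_{L^∞(Ω')}` is convex,
vanishes at `0`, and its lower right Dini derivative at `0` is at least
`max_{y ∈ Ω'(u)} { 2 Du(y) : DA }`, where `Ω'(u)` is the set of points of `closure Ω'`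
where `|Du|` attains the value `‖Du‖_{L^∞(Ω')}`. -/
theorem stmt2 {n N : ℕ} (Ω : Set (Fin n → ℝ)) (hΩ : IsOpen Ω)
    (u : (Fin n → ℝ) → (Fin N → ℝ)) (hu : ContDiffOn ℝ 1 u Ω)
    (Ω' : Set (Fin n → ℝ)) (hΩ' : IsOpen Ω') (hbd : Bornology.IsBounded Ω')
    (hcl : closure Ω' ⊆ Ω)
    (DA : Matrix (Fin N) (Fin n) ℝ)
    (h : ℝ → ℝ)
    (hdef : ∀ t : ℝ, h t =
      (sSup ((fun y => mnorm (gradm u y + t • DA)) '' closure Ω')) ^ 2 -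
        (sSup ((fun y => mnorm (gradm u y)) '' closure Ω')) ^ 2) :
    ConvexOn ℝ (Set.Ici (0 : ℝ)) h ∧ h 0 = 0 ∧
      sSup ((fun y => 2 * finner (gradm u y) DA) ''
          {x ∈ closure Ω' |
            mnorm (gradm u x) = sSup ((fun y => mnorm (gradm u y)) '' closure Ω')}) ≤
        Filter.liminf (fun t => h t / t) (nhdsWithin 0 (Set.Ioi 0)) :=
  stmt2_general Ω hΩ u hu Ω' hbd hcl DA h hdef
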